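/- Let P ⊆ S^{N−1} be a finite root system in ℝ^N (N ≥ 1) satisfying condition (EA), let ρ ≥ 0, and let Ω ⊆ ℝ^N satisfy the reflection property (RP) with respect to P and ρ. Suppose x ∈ Ω and |x| ≥ σ1(P)⁻¹σ2(P)(ρ + c·σ3(P)⁻¹) for some c > 0. Then there exists z₀ ∈ ℝ^N with |x − z₀| ≤ c/(2σ3(P)) such that the open ball B(z₀, c) is contained in Ω. -/

import Mathlib

/-!
Let `p₁ ∈ P` maximise `|⟪x, p⟫|` and put `M = |⟪x, p₁⟫|`. Then `x / M` is admissible in the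
definition of `σ₂`, so `‖x‖ ≤ σ₂ M` and the hypothesis gives `ρ + c / σ₃ ≤ σ₁ M`.
The roots `q` with `|⟪x, q⟫| ≥ σ₁ M` span `ℝ^N`: take a basis `b ⊆ P` with `|⟪b i, p₁⟫| ≥ σ₁`;
if some `b i` lay outside their span, so would its reflection in `p₁`, and `x` would pair with
both below `σ₁ M`, contradicting `|⟪x, b i⟫ - ⟪x, Ψ_{p₁} (b i)⟫| = 2 |⟪b i, p₁⟫| M`.
Flipping signs gives a basis `w ⊆ P` with `⟪x, w i⟫ ≥ ρ + c / σ₃`. Reflecting successively in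
hyperplanes orthogonal to the `w i` moves `x` to `x - u` for every `u` in the cone
`Co_{c/σ₃}(w)`, which by definition of `σ₃` contains a ball of radius `c`.
-/

open scoped RealInnerProductSpace
open Metric Set MeasureTheory

noncomputable section

abbrev E (N : ℕ) := EuclideanSpace ℝ (Fin N)

variable {N : ℕ}

/-- Reflection across the hyperplane `Π_p(s) = {x | x·p = s}`. -/
def reflect (p : E N) (s : ℝ) (x : E N) : E N := x - (2 * (⟪x, p⟫ - s)) • p

/-- Reflection across the hyperplane through the origin orthogonal to `p`. -/
def reflect0 (p : E N) : E N → E N := reflect p 0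

/-- A finite root system of unit vectors. -/
def IsRootSystem (P : Set (E N)) : Prop :=
  P.Finite ∧ (∀ p ∈ P, ‖p‖ = 1) ∧
  (∀ p ∈ P, {q | q ∈ P ∧ ∃ c : ℝ, q = c • p} = {p, -p}) ∧
  (∀ p ∈ P, reflect0 p '' P = P)

/-- Condition (EA): for every hyperplane through the origin (with normal `v ≠ 0`),
the part of `P` outside the hyperplane spans `ℝ^N`. -/
def CondEA (P : Set (E N)) : Prop :=
  ∀ v : E N, v ≠ 0 → Submodule.span ℝ {p | p ∈ P ∧ ⟪p, v⟫ ≠ 0} = ⊤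

/-- The reflection property (RP) with respect to `P` and `ρ`. -/
def ReflProp (P : Set (E N)) (ρ : ℝ) (Ω : Set (E N)) : Prop :=
  ∀ p ∈ P, ∀ s > ρ,
    reflect p s '' Ω ∩ {x | ⟪x, p⟫ < s} ⊆ Ω ∩ {x | ⟪x, p⟫ < s}

/-- `v` enumerates a basis of `ℝ^N` consisting of elements of `P`. -/
def BasisIn (P : Set (E N)) (v : Fin N → E N) : Prop :=
  (∀ i, v i ∈ P) ∧ LinearIndependent ℝ v ∧ Submodule.span ℝ (Set.range v) = ⊤

/-- The open cone `Co_r(A)` generated by a basis. -/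
def Cone (r : ℝ) (v : Fin N → E N) : Set (E N) :=
  {x | ∃ a : Fin N → ℝ, (∀ i, 0 < a i) ∧ (∑ i, a i) < r ∧ x = ∑ i, a i • v i}

/-- `σ₁(P)`. -/
def sigma1 (P : Set (E N)) : ℝ :=
  sInf {s | ∃ p₁ ∈ P, s = sSup {t | ∃ v : Fin N → E N, BasisIn P v ∧
    t = sInf (Set.range fun i => |⟪v i, p₁⟫|)}}

/-- `σ₂(P)`. -/
def sigma2 (P : Set (E N)) : ℝ :=
  sSup {t | ∃ x : E N, (∀ p ∈ P, |⟪p, x⟫| ≤ 1) ∧ t = ‖x‖}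

/-- `σ₃(P)`. -/
def sigma3 (P : Set (E N)) : ℝ :=
  sInf {s | ∃ v : Fin N → E N, BasisIn P v ∧
    s = sSup {r | 0 < r ∧ ball ((1 / (2 * (N : ℝ))) • ∑ i, v i) r ⊆ Cone 1 v}}

theorem eq_zero_of_forall_inner_eq_zero_of_span_eq_top {F : Type*} [NormedAddCommGroup F]
    [InnerProductSpace ℝ F] {S : Set F} (hS : Submodule.span ℝ S = ⊤) {x : F}
    (hx : ∀ p ∈ S, ⟪p, x⟫ = 0) : x = 0 := by
  have hker : Submodule.span ℝ S ≤ LinearMap.ker (innerₛₗ ℝ x) :=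
    Submodule.span_le.mpr fun p hp => by simpa [real_inner_comm] using hx p hp
  rw [hS] at hker
  simpa using hker (Submodule.mem_top (x := x))

theorem Set.Finite.exists_eq_csInf_image {α : Type*} {S : Set α} (hS : S.Finite) (hne : S.Nonempty)
    (f : α → ℝ) : ∃ a ∈ S, sInf {t | ∃ b ∈ S, t = f b} = f a ∧ ∀ b ∈ S, f a ≤ f b := by
  obtain ⟨a, ha, hmin⟩ := S.exists_min_image f hS hne
  refine ⟨a, ha, le_antisymm (csInf_le ⟨f a, ?_⟩ ⟨a, ha, rfl⟩) ?_, hmin⟩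
  · rintro _ ⟨b, hb, rfl⟩; exact hmin b hb
  · exact le_csInf ⟨f a, a, ha, rfl⟩ (by rintro _ ⟨b, hb, rfl⟩; exact hmin b hb)

theorem Set.Finite.exists_eq_csSup_image {α : Type*} {S : Set α} (hS : S.Finite) (hne : S.Nonempty)
    (f : α → ℝ) : ∃ a ∈ S, sSup {t | ∃ b ∈ S, t = f b} = f a ∧ ∀ b ∈ S, f b ≤ f a := by
  obtain ⟨a, ha, hmax⟩ := S.exists_max_image f hS hne
  refine ⟨a, ha, le_antisymm ?_ (le_csSup ⟨f a, ?_⟩ ⟨a, ha, rfl⟩), hmax⟩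
  · exact csSup_le ⟨f a, a, ha, rfl⟩ (by rintro _ ⟨b, hb, rfl⟩; exact hmax b hb)
  · rintro _ ⟨b, hb, rfl⟩; exact hmax b hb

theorem ball_sSup_subset {X : Type*} [PseudoMetricSpace X] (c : X) (U : Set X) :
    ball c (sSup {r | 0 < r ∧ ball c r ⊆ U}) ⊆ U := by
  intro u hu
  have hne : {r | 0 < r ∧ ball c r ⊆ U}.Nonempty := by
    by_contra h
    rw [Set.not_nonempty_iff_eq_empty] at h
    rw [h, Real.sSup_empty, mem_ball] at hu
    exact (dist_nonneg.trans_lt hu).false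
  obtain ⟨r, ⟨-, hrU⟩, hur⟩ := exists_lt_of_lt_csSup hne (mem_ball.mp hu)
  exact hrU (mem_ball.mpr hur)

section RootSystem

variable {P : Set (E N)}

theorem IsRootSystem.norm_eq_one (hP : IsRootSystem P) {p : E N} (hp : p ∈ P) : ‖p‖ = 1 :=
  hP.2.1 p hp

theorem IsRootSystem.neg_mem (hP : IsRootSystem P) {p : E N} (hp : p ∈ P) : -p ∈ P := by
  have h : -p ∈ ({p, -p} : Set (E N)) := by simp
  rw [← hP.2.2.1 p hp] at h
  exact h.1

theorem IsRootSystem.sub_smul_mem (hP : IsRootSystem P) {p q : E N} (hp : p ∈ P) (hq : q ∈ P) :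
    q - (2 * ⟪q, p⟫) • p ∈ P := by
  have h : reflect0 p q ∈ reflect0 p '' P := ⟨q, hq, rfl⟩
  rw [hP.2.2.2 p hp] at h
  simpa [reflect0, reflect] using h

theorem IsRootSystem.abs_inner_le_one (hP : IsRootSystem P) {p q : E N} (hp : p ∈ P)
    (hq : q ∈ P) : |⟪p, q⟫| ≤ 1 :=
  (abs_real_inner_le_norm p q).trans_eq (by rw [hP.norm_eq_one hp, hP.norm_eq_one hq, one_mul])

theorem CondEA.span_eq_top (hEA : CondEA P) : Submodule.span ℝ P = ⊤ := by
  cases subsingleton_or_nontrivial (E N)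
  · exact Subsingleton.elim _ _
  · obtain ⟨v, hv⟩ := exists_ne (0 : E N)
    exact top_le_iff.mp ((hEA v hv).ge.trans (Submodule.span_mono fun q hq => hq.1))

theorem CondEA.nonempty [NeZero N] (hEA : CondEA P) : P.Nonempty := by
  rw [Set.nonempty_iff_ne_empty]
  rintro rfl
  have h := hEA.span_eq_top
  rw [Submodule.span_empty] at h
  exact bot_ne_top h

theorem basisIn_of_linearIndependent {v : Fin N → E N} (hvP : ∀ i, v i ∈ P)
    (hv : LinearIndependent ℝ v) : BasisIn P v :=
  ⟨hvP, hv, hv.span_eq_top_of_card_eq_finrank' (by simp)⟩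

theorem exists_basisIn_of_span_eq_top {C : Set (E N)} (hCP : C ⊆ P)
    (hC : Submodule.span ℝ C = ⊤) : ∃ v, BasisIn P v ∧ ∀ i, v i ∈ C := by
  obtain ⟨b, hbC, hbspan, hbind⟩ := exists_linearIndependent ℝ C
  have : Fintype b := hbind.setFinite.fintype
  have hcard : Fintype.card b = N := by
    simpa using (Module.finrank_eq_card_basis (Module.Basis.mk hbind (by simp [hbspan, hC]))).symm
  let e : Fin N ≃ b := (Fintype.equivFinOfCardEq hcard).symm
  exact ⟨fun i => e i, basisIn_of_linearIndependent (fun i => hCP (hbC (e i).2))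
    (hbind.comp e e.injective), fun i => hbC (e i).2⟩

theorem basisIn_finite (hP : P.Finite) : {v : Fin N → E N | BasisIn P v}.Finite :=
  (Set.Finite.pi fun _ => hP).subset fun _ hv i _ => hv.1 i

end RootSystem

section Sigma

variable {P : Set (E N)}

theorem exists_basisIn_sigma1_le (hP : IsRootSystem P) (hEA : CondEA P) {p₁ : E N}
    (hp₁ : p₁ ∈ P) : ∃ v, BasisIn P v ∧ ∀ i, sigma1 P ≤ |⟪v i, p₁⟫| := by
  obtain ⟨v₀, hv₀, -⟩ := exists_basisIn_of_span_eq_top le_rfl hEA.span_eq_top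
  obtain ⟨v, hv, hsup, -⟩ := (basisIn_finite hP.1).exists_eq_csSup_image ⟨v₀, hv₀⟩
    fun v : Fin N → E N => ⨅ i, |⟪v i, p₁⟫|
  refine ⟨v, hv, fun i => ?_⟩
  calc sigma1 P ≤ ⨅ i, |⟪v i, p₁⟫| := by
        rw [← hsup]
        obtain ⟨_, -, hinf, hle⟩ := hP.1.exists_eq_csInf_image ⟨p₁, hp₁⟩
          fun p => sSup {t | ∃ v, BasisIn P v ∧ t = ⨅ i, |⟪v i, p⟫|}
        exact hinf.trans_le (hle p₁ hp₁)
    _ ≤ |⟪v i, p₁⟫| := ciInf_le (Set.finite_range _).bddBelow i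

theorem sigma1_le_one [NeZero N] (hP : IsRootSystem P) (hEA : CondEA P) : sigma1 P ≤ 1 := by
  obtain ⟨p, hp⟩ := hEA.nonempty
  obtain ⟨v, hv, hvp⟩ := exists_basisIn_sigma1_le hP hEA hp
  exact (hvp 0).trans (hP.abs_inner_le_one (hv.1 0) hp)

theorem sigma1_pos [NeZero N] (hP : IsRootSystem P) (hEA : CondEA P) : 0 < sigma1 P := by
  obtain ⟨p, hp, hinf, -⟩ := hP.1.exists_eq_csInf_image hEA.nonempty
    fun p => sSup {t | ∃ v, BasisIn P v ∧ t = ⨅ i, |⟪v i, p⟫|}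
  have hp0 : p ≠ 0 := by
    rintro rfl
    simpa using hP.norm_eq_one hp
  obtain ⟨v₀, hv₀, hv₀p⟩ := exists_basisIn_of_span_eq_top (fun q hq => hq.1) (hEA p hp0)
  obtain ⟨v, -, hsup, hle⟩ := (basisIn_finite hP.1).exists_eq_csSup_image ⟨v₀, hv₀⟩
    fun v : Fin N → E N => ⨅ i, |⟪v i, p⟫|
  obtain ⟨i, hi⟩ := exists_eq_ciInf_of_finite (f := fun i => |⟪v₀ i, p⟫|)
  calc 0 < |⟪v₀ i, p⟫| := abs_pos.mpr (hv₀p i).2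
    _ = ⨅ i, |⟪v₀ i, p⟫| := hi
    _ ≤ ⨅ i, |⟪v i, p⟫| := hle v₀ hv₀
    _ = sigma1 P := (hinf.trans hsup).symm

theorem bddAbove_norm_of_abs_inner_le_one (hspan : Submodule.span ℝ P = ⊤) :
    BddAbove {t | ∃ x : E N, (∀ p ∈ P, |⟪p, x⟫| ≤ 1) ∧ t = ‖x‖} := by
  obtain ⟨v, hv, -⟩ := exists_basisIn_of_span_eq_top le_rfl hspan
  let T : E N →ₗ[ℝ] (Fin N → ℝ) := LinearMap.pi fun i => innerₛₗ ℝ (v i)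
  have hT : LinearMap.ker T = ⊥ := LinearMap.ker_eq_bot'.mpr fun x hx =>
    eq_zero_of_forall_inner_eq_zero_of_span_eq_top hv.2.2
      (by rintro _ ⟨i, rfl⟩; exact congrFun hx i)
  obtain ⟨K, -, hK⟩ := T.exists_antilipschitzWith hT
  refine ⟨K, ?_⟩
  rintro _ ⟨x, hx, rfl⟩
  have hTx : ‖T x‖ ≤ 1 :=
    (pi_norm_le_iff_of_nonneg zero_le_one).mpr fun i => hx (v i) (hv.1 i)
  calc ‖x‖ ≤ K * ‖T x‖ := ZeroHomClass.bound_of_antilipschitz T hK x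
    _ ≤ K := mul_le_of_le_one_right K.2 hTx

theorem one_le_sigma2 [NeZero N] (hP : IsRootSystem P) (hEA : CondEA P) : 1 ≤ sigma2 P := by
  obtain ⟨p₀, hp₀⟩ := hEA.nonempty
  refine le_csSup (bddAbove_norm_of_abs_inner_le_one hEA.span_eq_top)
    ⟨p₀, fun p hp => ?_, (hP.norm_eq_one hp₀).symm⟩
  exact hP.abs_inner_le_one hp hp₀

theorem norm_le_sigma2_mul (hspan : Submodule.span ℝ P = ⊤) {x : E N} {M : ℝ} (hM : 0 ≤ M)
    (hxM : ∀ p ∈ P, |⟪p, x⟫| ≤ M) : ‖x‖ ≤ sigma2 P * M := by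
  rcases hM.eq_or_lt with rfl | hM
  · have hx : x = 0 := eq_zero_of_forall_inner_eq_zero_of_span_eq_top hspan
      fun p hp => abs_nonpos_iff.mp (hxM p hp)
    simp [hx]
  · have hdual : ‖M⁻¹ • x‖ ≤ sigma2 P := by
      refine le_csSup (bddAbove_norm_of_abs_inner_le_one hspan) ⟨M⁻¹ • x, fun p hp => ?_, rfl⟩
      rw [real_inner_smul_right, abs_mul, abs_inv, abs_of_pos hM, inv_mul_le_iff₀ hM, mul_one]
      exact hxM p hp
    rwa [norm_smul, Real.norm_of_nonneg (inv_nonneg.2 hM.le), inv_mul_le_iff₀ hM, mul_comm] at hdual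

theorem le_sigma1_mul_max_abs_inner [NeZero N] (hP : IsRootSystem P) (hEA : CondEA P)
    {x p₁ : E N} (hmax : ∀ p ∈ P, |⟪x, p⟫| ≤ |⟪x, p₁⟫|) {t : ℝ}
    (hfar : (sigma1 P)⁻¹ * sigma2 P * t ≤ ‖x‖) : t ≤ sigma1 P * |⟪x, p₁⟫| := by
  have hσ1 := sigma1_pos hP hEA
  have hnorm := norm_le_sigma2_mul hEA.span_eq_top (abs_nonneg _)
    fun p hp => real_inner_comm p x ▸ hmax p hp
  rw [mul_assoc, inv_mul_le_iff₀ hσ1] at hfar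
  refine le_of_mul_le_mul_left ?_ (one_pos.trans_le (one_le_sigma2 hP hEA))
  calc sigma2 P * t ≤ sigma1 P * ‖x‖ := hfar
    _ ≤ sigma1 P * (sigma2 P * |⟪x, p₁⟫|) := by gcongr
    _ = sigma2 P * (sigma1 P * |⟪x, p₁⟫|) := by ring

end Sigma

theorem le_of_ball_subset_ball {F : Type*} [NormedAddCommGroup F] [NormedSpace ℝ F]
    [Nontrivial F] {x y : F} {r s : ℝ} (hr : 0 < r) (h : ball x r ⊆ ball y s) : r ≤ s := by
  have hs : 0 ≤ s := dist_nonneg.trans (mem_ball.mp (h (mem_ball_self hr))).le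
  have hdiam := diam_mono h isBounded_ball
  rw [diam_ball_eq x hr.le, diam_ball_eq y hs] at hdiam
  linarith

def coneCenter (v : Fin N → E N) : E N := (1 / (2 * (N : ℝ))) • ∑ i, v i

theorem center_mem_cone [NeZero N] (v : Fin N → E N) : coneCenter v ∈ Cone 1 v := by
  have hN : (0 : ℝ) < N := Nat.cast_pos.mpr (NeZero.pos N)
  refine ⟨fun _ => 1 / (2 * N), fun _ => by positivity, ?_, by simp [coneCenter, Finset.smul_sum]⟩
  rw [Finset.sum_const, Finset.card_univ, Fintype.card_fin, nsmul_eq_mul]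
  field_simp
  norm_num

theorem norm_lt_of_mem_cone {v : Fin N → E N} (hv : ∀ i, ‖v i‖ ≤ 1) {r : ℝ} {x : E N}
    (hx : x ∈ Cone r v) : ‖x‖ < r := by
  obtain ⟨a, ha, hsum, rfl⟩ := hx
  calc ‖∑ i, a i • v i‖ ≤ ∑ i, ‖a i • v i‖ := norm_sum_le _ _
    _ ≤ ∑ i, a i := Finset.sum_le_sum fun i _ => by
        rw [norm_smul, Real.norm_of_nonneg (ha i).le]
        exact mul_le_of_le_one_right (ha i).le (hv i)
    _ < r := hsum

theorem norm_coneCenter_le {v : Fin N → E N} (hv : ∀ i, ‖v i‖ ≤ 1) : ‖coneCenter v‖ ≤ 1 / 2 := by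
  rcases Nat.eq_zero_or_pos N with rfl | hN
  · simp [coneCenter]
  · have hN : (0 : ℝ) < N := by exact_mod_cast hN
    calc ‖coneCenter v‖ ≤ 1 / (2 * N) * ∑ i, ‖v i‖ := by
          rw [coneCenter, norm_smul, Real.norm_of_nonneg (by positivity)]
          gcongr
          exact norm_sum_le _ _
      _ ≤ 1 / (2 * N) * N := by
          gcongr
          simpa using Finset.sum_le_sum fun i (_ : i ∈ Finset.univ) => hv i
      _ = 1 / 2 := by field_simp

theorem BasisIn.isOpen_cone {P : Set (E N)} {v : Fin N → E N} (hv : BasisIn P v) (r : ℝ) :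
    IsOpen (Cone r v) := by
  let b := Module.Basis.mk hv.2.1 hv.2.2.ge
  have hbv : ⇑b = v := Module.Basis.coe_mk _ _
  have hcone : Cone r v = b.equivFun ⁻¹' {a | (∀ i, 0 < a i) ∧ ∑ i, a i < r} := by
    ext x
    constructor
    · rintro ⟨a, ha, hsum, rfl⟩
      have hb : ∑ i, a i • v i = b.equivFun.symm a := by rw [b.equivFun_symm_apply, hbv]
      rw [hb, Set.mem_preimage, LinearEquiv.apply_symm_apply]
      exact ⟨ha, hsum⟩
    · rintro ⟨ha, hsum⟩
      exact ⟨_, ha, hsum, by rw [← hbv, b.sum_equivFun]⟩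
  rw [hcone]
  refine IsOpen.preimage (LinearMap.continuous_of_finiteDimensional b.equivFun.toLinearMap) ?_
  have hopen : IsOpen (Set.univ.pi (fun _ : Fin N => Set.Ioi (0 : ℝ)) ∩ {a | ∑ i, a i < r}) :=
    (isOpen_set_pi Set.finite_univ fun _ _ => isOpen_Ioi).inter
      (isOpen_lt (continuous_finsetSum _ fun i _ => continuous_apply i) continuous_const)
  convert hopen using 1
  ext a
  simp

section Sigma3

variable {P : Set (E N)}

theorem ball_sigma3_subset_cone (hP : P.Finite) {v : Fin N → E N} (hv : BasisIn P v) :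
    ball (coneCenter v) (sigma3 P) ⊆ Cone 1 v := by
  obtain ⟨_, -, hinf, hle⟩ := (basisIn_finite hP).exists_eq_csInf_image ⟨v, hv⟩
    fun v => sSup {r | 0 < r ∧ ball (coneCenter v) r ⊆ Cone 1 v}
  exact (ball_subset_ball (hinf.trans_le (hle v hv))).trans (ball_sSup_subset _ _)

theorem sigma3_pos [NeZero N] (hP : IsRootSystem P) (hEA : CondEA P) : 0 < sigma3 P := by
  obtain ⟨v₀, hv₀, -⟩ := exists_basisIn_of_span_eq_top le_rfl hEA.span_eq_top
  obtain ⟨v, hv, hinf, -⟩ := (basisIn_finite hP.1).exists_eq_csInf_image ⟨v₀, hv₀⟩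
    fun v => sSup {r | 0 < r ∧ ball (coneCenter v) r ⊆ Cone 1 v}
  obtain ⟨r, hr, hball⟩ := Metric.isOpen_iff.mp (hv.isOpen_cone 1) _ (center_mem_cone v)
  have hunit : ∀ i, ‖v i‖ ≤ 1 := fun i => (hP.norm_eq_one (hv.1 i)).le
  have hbdd : BddAbove {r | 0 < r ∧ ball (coneCenter v) r ⊆ Cone 1 v} :=
    ⟨1, fun r' ⟨hr', hsub⟩ => le_of_ball_subset_ball (y := 0) hr' fun u hu =>
      mem_ball_zero_iff.mpr (norm_lt_of_mem_cone hunit (hsub hu))⟩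
  calc 0 < r := hr
    _ ≤ sSup {r | 0 < r ∧ ball (coneCenter v) r ⊆ Cone 1 v} := le_csSup hbdd ⟨hr, hball⟩
    _ = sigma3 P := hinf.symm

end Sigma3

section Reflection

variable {P : Set (E N)} {ρ : ℝ} {Ω : Set (E N)}

theorem IsRootSystem.span_setOf_le_abs_inner_eq_top (hP : IsRootSystem P) {p₁ : E N}
    (hp₁ : p₁ ∈ P) {b : Fin N → E N} (hb : BasisIn P b) {s : ℝ} (hs : s ≤ 1)
    (hbp : ∀ i, s ≤ |⟪b i, p₁⟫|) (x : E N) :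
    Submodule.span ℝ {q | q ∈ P ∧ s * |⟪x, p₁⟫| ≤ |⟪x, q⟫|} = ⊤ := by
  set V := Submodule.span ℝ {q | q ∈ P ∧ s * |⟪x, p₁⟫| ≤ |⟪x, q⟫|}
  have hM := abs_nonneg ⟪x, p₁⟫
  have hp₁V : p₁ ∈ V := Submodule.subset_span ⟨hp₁, mul_le_of_le_one_left hM hs⟩
  have hlt : ∀ q ∈ P, q ∉ V → |⟪x, q⟫| < s * |⟪x, p₁⟫| :=
    fun q hq hqV => not_le.mp fun h => hqV (Submodule.subset_span ⟨hq, h⟩)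
  rw [eq_top_iff, ← hb.2.2, Submodule.span_le]
  rintro _ ⟨i, rfl⟩
  by_contra hi
  set y := b i - (2 * ⟪b i, p₁⟫) • p₁
  have hy : y ∉ V := fun h => hi <| by
    simpa [y] using V.add_mem h (V.smul_mem (2 * ⟪b i, p₁⟫) hp₁V)
  have hxy : ⟪x, y⟫ = ⟪x, b i⟫ - 2 * ⟪b i, p₁⟫ * ⟪x, p₁⟫ := by
    rw [inner_sub_right, real_inner_smul_right]
  have hsum : 2 * |⟪b i, p₁⟫| * |⟪x, p₁⟫| ≤ |⟪x, b i⟫| + |⟪x, y⟫| := by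
    calc 2 * |⟪b i, p₁⟫| * |⟪x, p₁⟫| = |⟪x, b i⟫ - ⟪x, y⟫| := by
          rw [hxy, sub_sub_cancel, abs_mul, abs_mul, abs_two]
      _ ≤ |⟪x, b i⟫| + |⟪x, y⟫| := abs_sub _ _
  nlinarith [hlt _ (hb.1 i) hi, hlt _ (hP.sub_smul_mem hp₁ (hb.1 i)) hy,
    mul_le_mul_of_nonneg_right (hbp i) hM]

theorem IsRootSystem.exists_basisIn_le_inner (hP : IsRootSystem P) {x : E N} {t : ℝ}
    (hspan : Submodule.span ℝ {q | q ∈ P ∧ t ≤ |⟪x, q⟫|} = ⊤) :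
    ∃ w, BasisIn P w ∧ ∀ i, t ≤ ⟪x, w i⟫ := by
  obtain ⟨v, hv, hvt⟩ := exists_basisIn_of_span_eq_top (fun q hq => hq.1) hspan
  let ε : Fin N → ℝˣ := fun i => if 0 ≤ ⟪x, v i⟫ then 1 else -1
  have hε : ∀ i, ε i • v i ∈ P ∧ t ≤ ⟪x, ε i • v i⟫ := by
    intro i
    by_cases h : 0 ≤ ⟪x, v i⟫
    · simp only [ε, if_pos h, one_smul]
      exact ⟨hv.1 i, (hvt i).2.trans (abs_of_nonneg h).le⟩
    · simp only [ε, if_neg h, Units.neg_smul, one_smul, inner_neg_right]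
      exact ⟨hP.neg_mem (hv.1 i), (hvt i).2.trans (abs_of_neg (not_le.mp h)).le⟩
  exact ⟨fun i => ε i • v i,
    basisIn_of_linearIndependent (fun i => (hε i).1) (hv.2.1.units_smul ε), fun i => (hε i).2⟩

theorem ReflProp.sub_smul_mem (hΩ : ReflProp P ρ Ω) {p y : E N} (hp : p ∈ P) (hp1 : ‖p‖ = 1)
    (hy : y ∈ Ω) {a : ℝ} (ha : 0 < a) (hya : ρ + a / 2 < ⟪y, p⟫) : y - a • p ∈ Ω := by
  have hpp : ⟪p, p⟫ = 1 := by rw [real_inner_self_eq_norm_sq, hp1, one_pow]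
  have hrefl : reflect p (⟪y, p⟫ - a / 2) y = y - a • p := by
    rw [reflect]
    congr 2
    ring
  refine (hΩ p hp _ (by linarith) ⟨⟨y, hy, hrefl⟩, ?_⟩).1
  show ⟪y - a • p, p⟫ < ⟪y, p⟫ - a / 2
  rw [inner_sub_left, real_inner_smul_left, hpp]
  linarith

theorem ReflProp.sub_sum_smul_mem (hΩ : ReflProp P ρ Ω) {ι : Type*} (s : Finset ι)
    {w : ι → E N} (hw : ∀ i ∈ s, w i ∈ P) (hw1 : ∀ i ∈ s, ‖w i‖ = 1) {a : ι → ℝ}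
    (ha : ∀ i ∈ s, 0 < a i) {x : E N} (hx : x ∈ Ω)
    (hxw : ∀ i ∈ s, ρ + ∑ j ∈ s, a j ≤ ⟪x, w i⟫) : x - ∑ i ∈ s, a i • w i ∈ Ω := by
  classical
  induction s using Finset.induction_on with
  | empty => simpa using hx
  | insert k s hk ih =>
    simp only [Finset.mem_insert, forall_eq_or_imp, Finset.sum_insert hk] at hw hw1 ha hxw ⊢
    have hz := ih hw.2 hw1.2 ha.2 fun i hi => by linarith [hxw.2 i hi, ha.1]
    have hinner : ∑ i ∈ s, a i * ⟪w i, w k⟫ ≤ ∑ i ∈ s, a i :=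
      Finset.sum_le_sum fun i hi => mul_le_of_le_one_right (ha.2 i hi).le <|
        (real_inner_le_norm _ _).trans_eq (by rw [hw1.2 i hi, hw1.1, one_mul])
    have hzk : ρ + a k ≤ ⟪x - ∑ i ∈ s, a i • w i, w k⟫ := by
      rw [inner_sub_left, sum_inner]
      simp only [real_inner_smul_left]
      linarith [hxw.1]
    rw [sub_add_eq_sub_sub_swap]
    exact hΩ.sub_smul_mem hw.1 hw1.1 hz ha.1 (by linarith [ha.1])

theorem smul_mem_cone {v : Fin N → E N} {r l : ℝ} (hl : 0 < l) {u : E N} (hu : u ∈ Cone r v) :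
    l • u ∈ Cone (l * r) v := by
  obtain ⟨a, ha, hsum, rfl⟩ := hu
  refine ⟨l • a, fun i => mul_pos hl (ha i), ?_, by simp [Finset.smul_sum, smul_smul]⟩
  simpa [← Finset.mul_sum] using mul_lt_mul_of_pos_left hsum hl

theorem ReflProp.sub_mem_of_mem_cone (hΩ : ReflProp P ρ Ω) {w : Fin N → E N}
    (hw : ∀ i, w i ∈ P) (hw1 : ∀ i, ‖w i‖ = 1) {x u : E N} (hx : x ∈ Ω) {r : ℝ}
    (hxw : ∀ i, ρ + r ≤ ⟪x, w i⟫) (hu : u ∈ Cone r w) : x - u ∈ Ω := by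
  obtain ⟨a, ha, hsum, rfl⟩ := hu
  exact hΩ.sub_sum_smul_mem Finset.univ (fun i _ => hw i) (fun i _ => hw1 i) (fun i _ => ha i) hx
    fun i _ => by linarith [hxw i]

theorem ReflProp.ball_subset (hΩ : ReflProp P ρ Ω) (hP : IsRootSystem P) {w : Fin N → E N}
    (hw : BasisIn P w) {x : E N} (hx : x ∈ Ω) {l : ℝ} (hl : 0 < l)
    (hxw : ∀ i, ρ + l ≤ ⟪x, w i⟫) : ball (x - l • coneCenter w) (l * sigma3 P) ⊆ Ω := by
  intro y hy
  have hcone : l⁻¹ • (x - y) ∈ Cone 1 w := by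
    refine ball_sigma3_subset_cone hP.1 hw ?_
    have h : l⁻¹ • (x - y) - coneCenter w = l⁻¹ • (x - l • coneCenter w - y) := by
      simp only [smul_sub, inv_smul_smul₀ hl.ne']
      abel
    rw [mem_ball, dist_eq_norm, h, norm_smul, Real.norm_of_nonneg (inv_nonneg.2 hl.le),
      inv_mul_lt_iff₀ hl, ← dist_eq_norm, dist_comm]
    exact hy
  have hxy : x - y ∈ Cone l w := by
    simpa [smul_inv_smul₀ hl.ne'] using smul_mem_cone hl hcone
  simpa using hΩ.sub_mem_of_mem_cone hw.1 (fun i => hP.norm_eq_one (hw.1 i)) hx hxw hxy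

end Reflection

theorem interior_ball_general (N : ℕ) (hN : 1 ≤ N) (P : Set (E N))
    (hP : IsRootSystem P) (hEA : CondEA P) (ρ : ℝ)
    (Ω : Set (E N)) (hΩ : ReflProp P ρ Ω) (x : E N) (hx : x ∈ Ω)
    (c : ℝ) (hc : 0 < c)
    (hfar : ‖x‖ ≥ (sigma1 P)⁻¹ * sigma2 P * (ρ + c * (sigma3 P)⁻¹)) :
    ∃ z₀ : E N, ‖x - z₀‖ ≤ c / (2 * sigma3 P) ∧ ball z₀ c ⊆ Ω := by
  have : NeZero N := ⟨by omega⟩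
  have hσ3 := sigma3_pos hP hEA
  obtain ⟨p₁, hp₁, hmax⟩ := P.exists_max_image (fun p => |⟪x, p⟫|) hP.1 hEA.nonempty
  obtain ⟨b, hb, hbp₁⟩ := exists_basisIn_sigma1_le hP hEA hp₁
  obtain ⟨w, hw, hxw⟩ := hP.exists_basisIn_le_inner
    (hP.span_setOf_le_abs_inner_eq_top hp₁ hb (sigma1_le_one hP hEA) hbp₁ x)
  set l := c * (sigma3 P)⁻¹ with hl
  have hl0 : 0 < l := by positivity
  have hρl : ρ + l ≤ sigma1 P * |⟪x, p₁⟫| := le_sigma1_mul_max_abs_inner hP hEA hmax hfar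
  refine ⟨x - l • coneCenter w, ?_, ?_⟩
  · rw [sub_sub_cancel, norm_smul, Real.norm_of_nonneg hl0.le]
    calc l * ‖coneCenter w‖ ≤ l * (1 / 2) := by
          gcongr
          exact norm_coneCenter_le fun i => (hP.norm_eq_one (hw.1 i)).le
      _ = c / (2 * sigma3 P) := by rw [hl]; field_simp
  · have hcl : c = l * sigma3 P := by rw [hl]; field_simp
    rw [hcl]
    exact hΩ.ball_subset hP hw hx hl0 fun i => hρl.trans (hxw i)

/-- interior ball near far-away points of `Ω`. -/
theorem interior_ball (N : ℕ) (hN : 1 ≤ N) (P : Set (E N))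
    (hP : IsRootSystem P) (hEA : CondEA P) (ρ : ℝ) (hρ : 0 ≤ ρ)
    (Ω : Set (E N)) (hΩ : ReflProp P ρ Ω) (x : E N) (hx : x ∈ Ω)
    (c : ℝ) (hc : 0 < c)
    (hfar : ‖x‖ ≥ (sigma1 P)⁻¹ * sigma2 P * (ρ + c * (sigma3 P)⁻¹)) :
    ∃ z₀ : E N, ‖x - z₀‖ ≤ c / (2 * sigma3 P) ∧ ball z₀ c ⊆ Ω :=
  interior_ball_general N hN P hP hEA ρ Ω hΩ x hx c hc hfar
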